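/- In a rotationally asymmetric configuration of finitely many distinct points on a circle with true leader L: if L is an undecided leader (i.e., L is the true leader when its antipode is assumed empty but not when its antipode is assumed occupied, both hypotheses being consistent), then the antipodal position of L is in fact empty (not occupied by any point of the configuration). -/

import Mathlib

open Real
open scoped Classical

noncomputable section

/-- Clockwise angular distance from `p` to `q`, a real number in `[0, 2π)`. -/
def cw (p q : Real.Angle) : ℝ :=
  if 0 ≤ (q - p).toReal then (q - p).toReal else (q - p).toReal + 2 * π

/-- The sorted list of clockwise distances from `p` to the points of `S`. -/
def dists (S : Finset Real.Angle) (p : Real.Angle) : List ℝ :=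
  (S.image (cw p)).sort (· ≤ ·)

/-- The clockwise angular-gap sequence of `p` with respect to the configuration `S`:
the sequence of clockwise gaps between consecutive points, starting from `p`. -/
def gapSeq (S : Finset Real.Angle) (p : Real.Angle) : List ℝ :=
  List.zipWith (fun a b => a - b) ((dists S p).tail ++ [2 * π]) (dists S p)

/-- Lexicographic strict order on lists of reals. -/
def lexLt (a b : List ℝ) : Prop := List.Lex (· < ·) a b

/-- `L` is the true leader of `S`: its angular-gap sequence is lexicographically
strictly smallest. -/
def TrueLeader (S : Finset Real.Angle) (L : Real.Angle) : Prop :=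
  L ∈ S ∧ ∀ r ∈ S, r ≠ L → lexLt (gapSeq S L) (gapSeq S r)

/-- `S` is rotationally asymmetric: no nontrivial rotation about the center fixes `S`. -/
def RotAsym (S : Finset Real.Angle) : Prop :=
  ∀ θ : Real.Angle, θ ≠ 0 → S.image (· + θ) ≠ S

/-- The antipodal position of a point on the circle. -/
def antipode (p : Real.Angle) : Real.Angle := p + (π : Real.Angle)

/-- The hypothetical configuration in which the antipode of `r` is unoccupied. -/
def C0 (S : Finset Real.Angle) (r : Real.Angle) : Finset Real.Angle := S.erase (antipode r)

/-- The hypothetical configuration in which the antipode of `r` is occupied. -/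
def C1 (S : Finset Real.Angle) (r : Real.Angle) : Finset Real.Angle := insert (antipode r) S

/-- `r` is an undecided leader: both hypothetical configurations are rotationally
asymmetric and `r` is the true leader of exactly one of them. -/
def Undecided (S : Finset Real.Angle) (r : Real.Angle) : Prop :=
  r ∈ S ∧ RotAsym (C0 S r) ∧ RotAsym (C1 S r) ∧
    Xor' (TrueLeader (C0 S r) r) (TrueLeader (C1 S r) r)

/-- `r` is a cognizant leader: `r` is the true leader in every consistent
(hypothetical) configuration. -/
def Cognizant (S : Finset Real.Angle) (r : Real.Angle) : Prop :=
  r ∈ S ∧ (RotAsym (C0 S r) → TrueLeader (C0 S r) r) ∧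
    (RotAsym (C1 S r) → TrueLeader (C1 S r) r)

/-- An expected leader is a cognizant leader or an undecided leader. -/
def ExpectedLeader (S : Finset Real.Angle) (r : Real.Angle) : Prop :=
  Cognizant S r ∨ Undecided S r

/-!
Compare points through their sets of clockwise offsets `offsets S p ⊆ [0, 2π)`. For sets of the
same size, the lexicographic order of gap sequences becomes: the least element of the symmetric
difference lies in the smaller set.

Let `m` be that least element for the leader `L` and another point `q`. Then `m < cw q L`:
otherwise the point `L + cw q L` would precede `L` (the leader's gap sequence has no border, as
for Lyndon words). Erasing the antipode `a = L + π` removes `π` from the offsets of `L` and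
`c = cw q a` from those of `q`. The first difference is kept at `m`, or moves to `c`, unless
`π ≤ m` and `π < c`; but then `cw q L = c - π < π ≤ m`. So `L` still leads once its antipode is
erased, and being undecided forbids this when the antipode is occupied.
-/

namespace List

variable {α : Type*} [LinearOrder α]

theorem le_of_mem_cons_of_forall_lt {a x : α} {l : List α} (hl : ∀ y ∈ l, a < y)
    (hx : x ∈ a :: l) : a ≤ x := by
  rcases mem_cons.1 hx with rfl | hx
  · exact le_rfl
  · exact (hl x hx).le

theorem lex_lt_iff_exists_of_pairwise_lt :
    ∀ {l l' : List α}, l.Pairwise (· < ·) → l'.Pairwise (· < ·) → l.length = l'.length →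
      (Lex (· < ·) l l' ↔ ∃ m ∈ l, m ∉ l' ∧ ∀ x < m, (x ∈ l ↔ x ∈ l'))
  | [], [], _, _, _ => by simp
  | a :: l, b :: l', hl, hl', hlen => by
    rw [pairwise_cons] at hl hl'
    have ih := lex_lt_iff_exists_of_pairwise_lt hl.2 hl'.2 (by simpa using hlen)
    rw [cons_lex_cons_iff]
    constructor
    · rintro (hab | ⟨rfl, hlex⟩)
      · refine ⟨a, mem_cons_self, fun ha => ?_, fun x hx => ?_⟩
        · exact hab.not_ge (le_of_mem_cons_of_forall_lt hl'.1 ha)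
        · exact iff_of_false (fun h => hx.not_ge (le_of_mem_cons_of_forall_lt hl.1 h))
            (fun h => (hx.trans hab).not_ge (le_of_mem_cons_of_forall_lt hl'.1 h))
      · obtain ⟨m, hm, hm', hagree⟩ := ih.1 hlex
        refine ⟨m, mem_cons_of_mem a hm, ?_, fun x hx => ?_⟩
        · rw [mem_cons, not_or]
          exact ⟨(hl.1 m hm).ne', hm'⟩
        · simp only [mem_cons, hagree x hx]
    · rintro ⟨m, hm, hm', hagree⟩
      have ham : a ≤ m := le_of_mem_cons_of_forall_lt hl.1 hm
      rcases lt_trichotomy a b with hab | rfl | hba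
      · exact Or.inl hab
      · have hma : m ≠ a := fun h => hm' (h ▸ mem_cons_self)
        refine Or.inr ⟨rfl, ih.2 ⟨m, (mem_cons.1 hm).resolve_left hma,
          fun h => hm' (mem_cons_of_mem a h), fun x hx => ?_⟩⟩
        rcases eq_or_ne x a with rfl | hxa
        · exact iff_of_false (fun h => (hl.1 x h).false) (fun h => (hl'.1 x h).false)
        · simpa [hxa] using hagree x hx
      · have := (hagree b (hba.trans_le ham)).2 mem_cons_self
        exact absurd (le_of_mem_cons_of_forall_lt hl.1 this) hba.not_ge

theorem lex_zipWith_sub_iff {β : Type*} [AddCommGroup β] [LinearOrder β] [IsOrderedAddMonoid β]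
    (c : β) : ∀ (a : β) {l l' : List β}, l.length = l'.length →
      (Lex (· < ·) (zipWith (· - ·) (l ++ [c]) (a :: l))
        (zipWith (· - ·) (l' ++ [c]) (a :: l')) ↔ Lex (· < ·) l l')
  | a, [], [], _ => by simp [cons_lex_cons_iff]
  | a, b :: l, b' :: l', hlen => by
    simp only [cons_append, zipWith_cons_cons, cons_lex_cons_iff, sub_lt_sub_iff_right,
      sub_left_inj]
    refine or_congr_right (and_congr_right fun hb => ?_)
    subst hb
    exact lex_zipWith_sub_iff c b (by simpa using hlen)

end List

namespace Finset

variable {α : Type*} [LinearOrder α]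

def LexLt (A B : Finset α) : Prop := ∃ m ∈ A, m ∉ B ∧ ∀ x < m, (x ∈ A ↔ x ∈ B)

theorem lex_sort_iff_lexLt {A B : Finset α} (h : #A = #B) :
    List.Lex (· < ·) (A.sort (· ≤ ·)) (B.sort (· ≤ ·)) ↔ A.LexLt B := by
  rw [List.lex_lt_iff_exists_of_pairwise_lt (List.sortedLT_iff_pairwise.1 (sortedLT_sort A))
    (List.sortedLT_iff_pairwise.1 (sortedLT_sort B)) (by simp [h])]
  simp only [mem_sort, LexLt]

theorem LexLt.not_lexLt {A B : Finset α} (h : A.LexLt B) : ¬ B.LexLt A := by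
  obtain ⟨m, hmA, hmB, hagree⟩ := h
  rintro ⟨m', hm'B, hm'A, hagree'⟩
  rcases lt_trichotomy m m' with hlt | rfl | hlt
  · exact hmB ((hagree' m hlt).2 hmA)
  · exact hmB hm'B
  · exact hm'A ((hagree m' hlt).2 hm'B)

theorem lexLt_erase_erase {A B : Finset α} {w a b : α} (hwA : w ∈ A) (hwB : w ∉ B.erase b)
    (hwa : w < a) (hwb : w ≤ b) (hagree : ∀ x < w, (x ∈ A ↔ x ∈ B)) :
    (A.erase a).LexLt (B.erase b) := by
  refine ⟨w, mem_erase.2 ⟨hwa.ne, hwA⟩, hwB, fun x hx => ?_⟩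
  rw [mem_erase, mem_erase, hagree x hx]
  simp only [(hx.trans hwa).ne, (hx.trans_le hwb).ne, ne_eq, not_false_eq_true, true_and]

end Finset

theorem cw_nonneg (p q : Real.Angle) : 0 ≤ cw p q := by
  unfold cw; split
  · assumption
  · linarith [Real.Angle.neg_pi_lt_toReal (q - p), pi_pos]

theorem cw_lt_two_pi (p q : Real.Angle) : cw p q < 2 * π := by
  unfold cw; split
  · linarith [Real.Angle.toReal_le_pi (q - p), pi_pos]
  · linarith [Real.Angle.toReal_le_pi (q - p)]

theorem add_cw (p q : Real.Angle) : p + (cw p q : Real.Angle) = q := by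
  have : (cw p q : Real.Angle) = q - p := by
    unfold cw; split
    · exact Real.Angle.coe_toReal _
    · rw [Real.Angle.coe_add, Real.Angle.coe_two_pi, add_zero, Real.Angle.coe_toReal]
  rw [this, add_sub_cancel]

theorem cw_injective (p : Real.Angle) : Function.Injective (cw p) := fun q q' h => by
  rw [← add_cw p q, h, add_cw]

theorem cw_add_coe (p : Real.Angle) {δ : ℝ} (h0 : 0 ≤ δ) (h2 : δ < 2 * π) :
    cw p (p + δ) = δ := by
  rcases le_or_gt δ π with hle | hgt
  · have hδ : (δ : Real.Angle).toReal = δ :=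
      Real.Angle.toReal_coe_eq_self_iff.2 ⟨by linarith [pi_pos], hle⟩
    simp [cw, hδ, h0]
  · have hδ : (δ : Real.Angle).toReal = δ - 2 * π := by
      rw [← sub_zero (δ : Real.Angle), ← Real.Angle.coe_two_pi, ← Real.Angle.coe_sub,
        Real.Angle.toReal_coe_eq_self_iff]
      constructor <;> linarith
    simp [cw, hδ, show ¬ 0 ≤ δ - 2 * π by linarith]

def offsets (S : Finset Real.Angle) (p : Real.Angle) : Finset ℝ := S.image (cw p)

theorem mem_offsets {S : Finset Real.Angle} {p : Real.Angle} {x : ℝ} :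
    x ∈ offsets S p ↔ 0 ≤ x ∧ x < 2 * π ∧ p + x ∈ S := by
  constructor
  · intro hx
    obtain ⟨q, hq, rfl⟩ := Finset.mem_image.1 hx
    exact ⟨cw_nonneg p q, cw_lt_two_pi p q, by rwa [add_cw]⟩
  · rintro ⟨h0, h2, hx⟩
    exact Finset.mem_image.2 ⟨_, hx, cw_add_coe p h0 h2⟩

theorem card_offsets (S : Finset Real.Angle) (p : Real.Angle) : (offsets S p).card = S.card :=
  Finset.card_image_of_injective S (cw_injective p)

theorem offsets_erase (S : Finset Real.Angle) (p a : Real.Angle) :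
    offsets (S.erase a) p = (offsets S p).erase (cw p a) :=
  Finset.image_erase (cw_injective p) S a

theorem exists_dists_eq_zero_cons {S : Finset Real.Angle} {p : Real.Angle} (hp : p ∈ S) :
    ∃ l, dists S p = 0 :: l := by
  have hsorted := (offsets S p).pairwise_sort (· ≤ ·)
  have h0 : (0 : ℝ) ∈ dists S p := by
    rw [dists, Finset.mem_sort]
    exact mem_offsets.2 ⟨le_rfl, by linarith [pi_pos], by simpa using hp⟩
  change List.Pairwise _ (dists S p) at hsorted
  cases hd : dists S p with
  | nil => simp [hd] at h0
  | cons a l =>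
    rw [hd, List.pairwise_cons] at hsorted
    have ha : a ∈ offsets S p := by
      rw [← Finset.mem_sort (· ≤ ·)]
      change a ∈ dists S p
      rw [hd]
      exact List.mem_cons_self
    have ha0 : a ≤ 0 := by
      rcases List.mem_cons.1 (hd ▸ h0) with h | h
      · exact h.ge
      · exact hsorted.1 0 h
    exact ⟨l, by rw [le_antisymm ha0 (mem_offsets.1 ha).1]⟩

theorem lexLt_gapSeq_iff {S : Finset Real.Angle} {p q : Real.Angle} (hp : p ∈ S) (hq : q ∈ S) :
    lexLt (gapSeq S p) (gapSeq S q) ↔ (offsets S p).LexLt (offsets S q) := by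
  have hlen (r : Real.Angle) : (dists S r).length = S.card := by
    rw [dists, Finset.length_sort, ← offsets, card_offsets]
  obtain ⟨l, hl⟩ := exists_dists_eq_zero_cons hp
  obtain ⟨l', hl'⟩ := exists_dists_eq_zero_cons hq
  have hll' : l.length = l'.length := by
    simpa [hl, hl'] using (hlen p).trans (hlen q).symm
  rw [lexLt, gapSeq, gapSeq, hl, hl', List.tail_cons, List.tail_cons,
    List.lex_zipWith_sub_iff _ _ hll', ← List.lex_cons_iff (a := 0), ← hl, ← hl']
  exact Finset.lex_sort_iff_lexLt ((card_offsets S p).trans (card_offsets S q).symm)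

theorem trueLeader_iff {S : Finset Real.Angle} {L : Real.Angle} :
    TrueLeader S L ↔ L ∈ S ∧ ∀ r ∈ S, r ≠ L → (offsets S L).LexLt (offsets S r) := by
  refine and_congr_right fun hL => forall₂_congr fun r hr => ?_
  rw [lexLt_gapSeq_iff hL hr]

theorem TrueLeader.first_diff_lt_cw {S : Finset Real.Angle} {L q : Real.Angle}
    (hL : TrueLeader S L) (hqL : q ≠ L) {m : ℝ} (hmL : m ∈ offsets S L)
    (hmq : m ∉ offsets S q) (hagree : ∀ x < m, (x ∈ offsets S L ↔ x ∈ offsets S q)) :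
    m < cw q L := by
  obtain ⟨hLS, hlead⟩ := trueLeader_iff.1 hL
  set σ := cw q L
  have hLq : L = q + σ := (add_cw q L).symm
  have hσ0 : 0 ≤ σ := cw_nonneg q L
  obtain ⟨hm0, hm2, hmS⟩ := mem_offsets.1 hmL
  by_contra! hσm
  have hσq : σ ∈ offsets S q := Finset.mem_image_of_mem _ hLS
  have hσm' : σ < m := lt_of_le_of_ne hσm fun h => hmq (h ▸ hσq)
  have hs : L + σ ∈ S := (mem_offsets.1 ((hagree σ hσm').2 hσq)).2.2
  have hsL : L + σ ≠ L := by
    intro h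
    have hσ : (σ : Real.Angle) = 0 := by simpa using h
    exact hqL (by rw [hLq, hσ, add_zero])
  refine (hlead _ hs hsL).not_lexLt ⟨m - σ, ?_, fun h => ?_, fun x hx => ?_⟩
  · refine mem_offsets.2 ⟨by linarith, by linarith, ?_⟩
    rw [Real.Angle.coe_sub, add_add_sub_cancel]
    exact hmS
  · refine hmq (mem_offsets.2 ⟨hm0, hm2, ?_⟩)
    have := (mem_offsets.1 h).2.2
    rwa [Real.Angle.coe_sub, hLq, add_add_sub_cancel] at this
  · rw [mem_offsets, mem_offsets]
    refine and_congr_right fun hx0 => and_congr_right fun _ => ?_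
    have := hagree (σ + x) (by linarith)
    rw [mem_offsets, mem_offsets, Real.Angle.coe_add, ← add_assoc, ← add_assoc, ← hLq] at this
    simpa only [show 0 ≤ σ + x by linarith, show σ + x < 2 * π by linarith, true_and] using this

theorem TrueLeader.erase_antipode {S : Finset Real.Angle} {L : Real.Angle} (hL : TrueLeader S L)
    (ha : antipode L ∈ S) : TrueLeader (S.erase (antipode L)) L := by
  obtain ⟨hLS, hlead⟩ := trueLeader_iff.1 hL
  have hLa : L ≠ antipode L := fun h =>
    Real.Angle.pi_ne_zero (by simpa [antipode] using h.symm)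
  refine trueLeader_iff.2 ⟨Finset.mem_erase.2 ⟨hLa, hLS⟩, fun r hr hrL => ?_⟩
  obtain ⟨m, hmL, hmr, hagree⟩ := hlead r (Finset.mem_of_mem_erase hr) hrL
  have hcS : cw r (antipode L) ∈ offsets S r := Finset.mem_image_of_mem _ ha
  rw [offsets_erase, offsets_erase,
    show cw L (antipode L) = π from cw_add_coe L pi_pos.le (by linarith [pi_pos])]
  set c := cw r (antipode L)
  by_cases h1 : m < π ∧ m < c
  · exact Finset.lexLt_erase_erase hmL (fun h => hmr (Finset.mem_of_mem_erase h)) h1.1 h1.2.le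
      hagree
  by_cases h2 : c < π ∧ c ≤ m
  · have hcm : c < m := lt_of_le_of_ne h2.2 fun h => hmr (h ▸ hcS)
    exact Finset.lexLt_erase_erase ((hagree c hcm).2 hcS) (Finset.notMem_erase c _) h2.1 le_rfl
      fun x hx => hagree x (hx.trans hcm)
  exfalso
  have hcπ : c ≠ π := fun h => hrL <| by
    have : r + (c : Real.Angle) = L + π := add_cw r (antipode L)
    rw [h] at this
    exact add_right_cancel this
  have hc : π < c := by
    refine (lt_or_gt_of_ne hcπ).resolve_left fun h => ?_
    by_cases hcm : c ≤ m
    · exact h2 ⟨h, hcm⟩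
    · exact h1 ⟨by linarith, by linarith⟩
  have hm : π ≤ m := le_of_not_gt fun h => h1 ⟨h, by linarith⟩
  have hrL' : cw r L = c - π := by
    have hL' : L = r + ((c - π : ℝ) : Real.Angle) := by
      rw [Real.Angle.coe_sub, ← add_sub_assoc, add_cw, antipode, add_sub_cancel_right]
    rw [hL']
    exact cw_add_coe r (by linarith) (by linarith [cw_lt_two_pi r (antipode L)])
  have := hL.first_diff_lt_cw hrL hmL hmr hagree
  linarith [cw_lt_two_pi r (antipode L)]

theorem stmt7_general (S : Finset Real.Angle)
    (L : Real.Angle) (hL : TrueLeader S L) (hU : Undecided S L) :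
    antipode L ∉ S := by
  intro ha
  have hC0 : TrueLeader (C0 S L) L := hL.erase_antipode ha
  have hC1 : TrueLeader (C1 S L) L := by rwa [C1, Finset.insert_eq_of_mem ha]
  rcases hU.2.2.2 with ⟨-, h⟩ | ⟨-, h⟩
  · exact h hC1
  · exact h hC0

theorem stmt7 (S : Finset Real.Angle) (hasym : RotAsym S)
    (L : Real.Angle) (hL : TrueLeader S L) (hU : Undecided S L) :
    antipode L ∉ S :=
  stmt7_general S L hL hU
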